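/- Let (X,d) be a metric space, let o, a, b ∈ X with d(o,a) > 0 and d(o,b) > 0, and let s be a real number with 0 ≤ s ≤ min(d(o,a), d(o,b)). Suppose p ∈ X is a CAT(0) comparison point at parameter t₁ = s/d(o,a) for the pair (o,a), and q ∈ X is a CAT(0) comparison point at parameter t₂ = s/d(o,b) for the pair (o,b). Then d(p,q)² ≤ s² · ( d(a,b)² − (d(o,a) − d(o,b))² ) / ( d(o,a) · d(o,b) ). -/

import Mathlib

/-- `p` is a CAT(0) comparison point at parameter `t` for the pair `(o, y)`:
the negative curvature inequality satisfied by the point at parameter `t` on the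
geodesic segment `[o, y]` in any CAT(0) space. -/
def IsCAT0ComparisonPoint {X : Type*} [MetricSpace X] (o y : X) (t : ℝ) (p : X) : Prop :=
  ∀ z : X, dist z p ^ 2 ≤ (1 - t) * dist z o ^ 2 + t * dist z y ^ 2 - t * (1 - t) * dist o y ^ 2

/-!
If `p` and `q` sit at parameters `u` and `v` on "segments" `[o, a]` and `[o, b]`, the
comparison inequality for `q` tested at `p`, followed by the inequalities for `p` tested at
`o` and at `b`, bounds `d(p, q)²` by its value in the Euclidean comparison triangle,
`u²d(o,a)² + v²d(o,b)² − uv(d(o,a)² + d(o,b)² − d(a,b)²)`. For `u d(o,a) = v d(o,b) = s`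
this value is `s²(d(a,b)² − (d(o,a) − d(o,b))²) / (d(o,a) d(o,b))`.
-/

namespace IsCAT0ComparisonPoint

variable {X : Type*} [MetricSpace X] {o a b p q : X} {u v : ℝ}

theorem dist_left_sq_le (hp : IsCAT0ComparisonPoint o a u p) :
    dist o p ^ 2 ≤ u ^ 2 * dist o a ^ 2 := by
  have h := hp o
  rw [dist_self] at h
  linarith

theorem dist_sq_le (hp : IsCAT0ComparisonPoint o a u p) (hq : IsCAT0ComparisonPoint o b v q)
    (hv0 : 0 ≤ v) (hv1 : v ≤ 1) :
    dist p q ^ 2 ≤ u ^ 2 * dist o a ^ 2 + v ^ 2 * dist o b ^ 2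
      - u * v * (dist o a ^ 2 + dist o b ^ 2 - dist a b ^ 2) := by
  have hqp := hq p
  have hpo := hp.dist_left_sq_le
  have hpb := hp b
  rw [dist_comm p o, dist_comm p b] at hqp
  rw [dist_comm b o, dist_comm b a] at hpb
  linear_combination hqp + mul_le_mul_of_nonneg_left hpo (sub_nonneg.2 hv1)
    + mul_le_mul_of_nonneg_left hpb hv0

end IsCAT0ComparisonPoint

theorem cat0_equal_radius_estimate {X : Type*} [MetricSpace X]
    (o a b p q : X) (s : ℝ)
    (hoa : 0 < dist o a) (hob : 0 < dist o b)
    (hs0 : 0 ≤ s) (hs : s ≤ min (dist o a) (dist o b))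
    (hp : IsCAT0ComparisonPoint o a (s / dist o a) p)
    (hq : IsCAT0ComparisonPoint o b (s / dist o b) q) :
    dist p q ^ 2 ≤ s ^ 2 * (dist a b ^ 2 - (dist o a - dist o b) ^ 2)
      / (dist o a * dist o b) := by
  have hv1 : s / dist o b ≤ 1 := (div_le_one hob).2 (hs.trans (min_le_right _ _))
  calc dist p q ^ 2
      ≤ (s / dist o a) ^ 2 * dist o a ^ 2 + (s / dist o b) ^ 2 * dist o b ^ 2
          - s / dist o a * (s / dist o b) * (dist o a ^ 2 + dist o b ^ 2 - dist a b ^ 2) :=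
        hp.dist_sq_le hq (div_nonneg hs0 hob.le) hv1
    _ = s ^ 2 * (dist a b ^ 2 - (dist o a - dist o b) ^ 2) / (dist o a * dist o b) := by
        field_simp
        ring
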